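/- The function W : (ℂ∖{0})² → ℂ defined by W(y_1, y_2) = 3y_1 + y_2 + 3·y_1^{−1} + y_1^{−1}y_2^{−1} + (1/2)·y_2^{−1} − (5/2)·y_1 y_2^{−1} + y_1^{2} y_2^{−1} has exactly 7 critical points, and each of these critical points is nondegenerate. -/

import Mathlib

/-- The potential function of the monotone fiber `L(4,4.5)` in `X̂₆` with the chosen bulk deformation (energy factor dropped). -/
noncomputable def W : ℂ → ℂ → ℂ := fun y₁ y₂ =>
  3 * y₁ + y₂ + 3 * y₁⁻¹ + y₁⁻¹ * y₂⁻¹ + (1 / 2) * y₂⁻¹ - (5 / 2) * y₁ * y₂⁻¹ + y₁ ^ 2 * y₂⁻¹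

/-- A point of `(ℂ∖{0})²` is a critical point of `W` if both partial
derivatives of `W` vanish there. -/
def IsCritPt (p : ℂ × ℂ) : Prop :=
  p.1 ≠ 0 ∧ p.2 ≠ 0 ∧
    deriv (fun z => W z p.2) p.1 = 0 ∧ deriv (fun z => W p.1 z) p.2 = 0

/-- The Hessian determinant
`(∂²W/∂y₁²)(∂²W/∂y₂²) - (∂²W/∂y₁∂y₂)²` of `W` at a point. -/
noncomputable def hessDet (p : ℂ × ℂ) : ℂ :=
  deriv (deriv (fun z => W z p.2)) p.1 * deriv (deriv (fun z => W p.1 z)) p.2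
    - (deriv (fun w => deriv (fun z => W z w) p.1) p.2) ^ 2

/-! At a critical point both partial derivatives vanish, and clearing denominators gives
`(6x² - 6) y = -4x³ + 5x² + 2` and `2 x y² = 2x³ - 5x² + x + 2`. Eliminating `y` leaves a
separable polynomial of degree 7 in `x`, and the first equation recovers `y` from `x`, so the
critical points are in bijection with its 7 roots. At a critical point the Hessian determinant
is, up to a nonvanishing factor, a sextic in `x` coprime to that polynomial.
The nonvanishing statements are all certified by explicit Bézout identities. -/

open Polynomial

theorem Polynomial.separable_of_mul_add_mul_derivative_eq_C {K : Type*} [Field K] {p a b : K[X]}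
    {c : K} (hc : c ≠ 0) (h : a * p + b * derivative p = C c) : p.Separable :=
  ⟨C c⁻¹ * a, C c⁻¹ * b, by
    rw [mul_assoc, mul_assoc, ← mul_add, h, ← C_mul, inv_mul_cancel₀ hc, C_1]⟩

section Laurent

variable (a b c d : ℂ) {z : ℂ}

theorem hasDerivAt_laurent (hz : z ≠ 0) :
    HasDerivAt (fun z => a * z ^ 2 + b * z + c + d * z⁻¹) (2 * a * z + b - d / z ^ 2) z := by
  refine (((((hasDerivAt_pow 2 z).const_mul a).add ((hasDerivAt_id z).const_mul b)).add_const
    c).add ((hasDerivAt_inv hz).const_mul d)).congr_deriv ?_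
  field_simp
  ring

theorem deriv_laurent (hz : z ≠ 0) :
    deriv (fun z => a * z ^ 2 + b * z + c + d * z⁻¹) z = 2 * a * z + b - d / z ^ 2 :=
  (hasDerivAt_laurent a b c d hz).deriv

theorem deriv_deriv_laurent (hz : z ≠ 0) :
    deriv (deriv fun z => a * z ^ 2 + b * z + c + d * z⁻¹) z = 2 * a + 2 * d / z ^ 3 := by
  have h : deriv (fun z => a * z ^ 2 + b * z + c + d * z⁻¹)
      =ᶠ[nhds z] fun z => 2 * a * z + b - d * (z ^ 2)⁻¹ := by
    filter_upwards [isOpen_ne.mem_nhds hz] with w hw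
    rw [deriv_laurent a b c d hw, div_eq_mul_inv]
  rw [h.deriv_eq]
  refine (((((hasDerivAt_id z).const_mul (2 * a)).add_const b).sub
    (((hasDerivAt_pow 2 z).inv (pow_ne_zero 2 hz)).const_mul d)).congr_deriv ?_).deriv
  field_simp
  ring

end Laurent

theorem W_fst_eq (y : ℂ) :
    (fun z => W z y) =
      fun z => y⁻¹ * z ^ 2 + (3 - 5 / 2 * y⁻¹) * z + (y + y⁻¹ / 2)
        + (3 + y⁻¹) * z⁻¹ := by
  funext z
  simp only [W]
  ring

theorem W_snd_eq (x : ℂ) :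
    (fun w => W x w) =
      fun w => 0 * w ^ 2 + 1 * w + 3 * (x + x⁻¹)
        + (x⁻¹ + 1 / 2 - 5 / 2 * x + x ^ 2) * w⁻¹ := by
  funext w
  simp only [W]
  ring

variable {x y : ℂ}

theorem deriv_W_fst (hx : x ≠ 0) (hy : y ≠ 0) :
    deriv (fun z => W z y) x =
      ((6 * x ^ 2 - 6) * y - (-4 * x ^ 3 + 5 * x ^ 2 + 2)) / (2 * x ^ 2 * y) := by
  rw [W_fst_eq, deriv_laurent _ _ _ _ hx]
  field_simp
  ring

theorem deriv_W_snd (hx : x ≠ 0) (hy : y ≠ 0) :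
    deriv (fun w => W x w) y =
      (2 * x * y ^ 2 - (2 * x ^ 3 - 5 * x ^ 2 + x + 2)) / (2 * x * y ^ 2) := by
  rw [W_snd_eq, deriv_laurent _ _ _ _ hy]
  field_simp
  ring

theorem deriv_deriv_W_fst (hx : x ≠ 0) (hy : y ≠ 0) :
    deriv (deriv fun z => W z y) x = (2 * x ^ 3 + 6 * y + 2) / (x ^ 3 * y) := by
  rw [W_fst_eq, deriv_deriv_laurent _ _ _ _ hx]
  field_simp
  ring

theorem deriv_deriv_W_snd (hx : x ≠ 0) (hy : y ≠ 0) :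
    deriv (deriv fun w => W x w) y = (2 * x ^ 3 - 5 * x ^ 2 + x + 2) / (x * y ^ 3) := by
  rw [W_snd_eq, deriv_deriv_laurent _ _ _ _ hy]
  field_simp
  ring

theorem deriv_deriv_W_fst_snd (hx : x ≠ 0) (hy : y ≠ 0) :
    deriv (fun w => deriv (fun z => W z w) x) y =
      (-4 * x ^ 3 + 5 * x ^ 2 + 2) / (2 * x ^ 2 * y ^ 2) := by
  have h : (fun w => deriv (fun z => W z w) x) =
      fun w => 0 * w ^ 2 + 0 * w + (3 - 3 * (x ^ 2)⁻¹)
        + (2 * x - 5 / 2 - (x ^ 2)⁻¹) * w⁻¹ := by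
    funext w
    rw [W_fst_eq, deriv_laurent _ _ _ _ hx]
    ring
  rw [h, deriv_laurent _ _ _ _ hy]
  field_simp
  ring

theorem hessDet_eq (hx : x ≠ 0) (hy : y ≠ 0) :
    hessDet (x, y) = (4 * (2 * x ^ 3 + 6 * y + 2) * (2 * x ^ 3 - 5 * x ^ 2 + x + 2)
      - (-4 * x ^ 3 + 5 * x ^ 2 + 2) ^ 2) / (4 * x ^ 4 * y ^ 4) := by
  simp only [hessDet]
  rw [deriv_deriv_W_fst hx hy, deriv_deriv_W_snd hx hy, deriv_deriv_W_fst_snd hx hy]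
  field_simp
  ring

theorem isCritPt_iff_eqns :
    IsCritPt (x, y) ↔ x ≠ 0 ∧ y ≠ 0 ∧ (6 * x ^ 2 - 6) * y = -4 * x ^ 3 + 5 * x ^ 2 + 2 ∧
      2 * x * y ^ 2 = 2 * x ^ 3 - 5 * x ^ 2 + x + 2 := by
  simp only [IsCritPt]
  refine and_congr_right fun hx => and_congr_right fun hy => ?_
  rw [deriv_W_fst hx hy, deriv_W_snd hx hy]
  simp [hx, hy, sub_eq_zero]

noncomputable def critPoly : ℂ[X] :=
  20 * X ^ 7 - 50 * X ^ 6 - 79 * X ^ 5 + 232 * X ^ 4 - 20 * X ^ 3 - 162 * X ^ 2 + 14 * X + 36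

theorem isRoot_critPoly_iff : critPoly.IsRoot x ↔
    20 * x ^ 7 - 50 * x ^ 6 - 79 * x ^ 5 + 232 * x ^ 4 - 20 * x ^ 3 - 162 * x ^ 2 + 14 * x + 36
      = 0 := by
  simp [critPoly]

theorem critPoly_natDegree : critPoly.natDegree = 7 := by
  unfold critPoly
  compute_degree!

theorem critPoly_separable : critPoly.Separable := by
  refine separable_of_mul_add_mul_derivative_eq_C (c := 5552592628366149300) (by norm_num)
    (a := 55039041226896440 * X ^ 5 - 166888355765868220 * X ^ 4
      + 201818214622766790 * X ^ 3 + 283991053155302593 * X ^ 2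
      - 1203846936733496384 * X + 204288902757569158)
    (b := -7862720175270920 * X ^ 6 + 26649308029149360 * X ^ 5
      - 22454856316508096 * X ^ 4 - 74682313592130669 * X ^ 3
      + 268302330897330212 * X ^ 2 - 87181219390079914 * X - 128700562207595742) ?_
  simp only [critPoly, derivative_add, derivative_sub, derivative_mul, derivative_ofNat,
    derivative_X_pow, derivative_X, Nat.cast_ofNat, map_ofNat C]
  ring

theorem ncard_rootSet_critPoly : (critPoly.rootSet ℂ).ncard = 7 := by
  rw [Set.ncard_eq_toFinset_card', Set.toFinset_card,
    card_rootSet_eq_natDegree critPoly_separable (IsAlgClosed.splits _), critPoly_natDegree]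

theorem ne_zero_of_isRoot_critPoly (hx : critPoly.IsRoot x) : x ≠ 0 := by
  intro h
  rw [isRoot_critPoly_iff, h] at hx
  norm_num at hx

theorem sq_sub_ne_zero_of_isRoot_critPoly (hx : critPoly.IsRoot x) : 6 * x ^ 2 - 6 ≠ 0 := by
  rw [isRoot_critPoly_iff] at hx
  intro h
  have : (1089 : ℂ) = 0 := by
    linear_combination (-65 * x - 56) * hx + (1300 * x ^ 6 - 2130 * x ^ 5 - 6635 * x ^ 4
      + 8526 * x ^ 3 + 5057 * x ^ 2 - 3124 * x - 3105) / 6 * h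
  norm_num at this

theorem critNum_ne_zero_of_isRoot_critPoly (hx : critPoly.IsRoot x) :
    -4 * x ^ 3 + 5 * x ^ 2 + 2 ≠ 0 := by
  rw [isRoot_critPoly_iff] at hx
  intro h
  have : (801900 : ℂ) = 0 := by
    linear_combination (-10532 * x ^ 2 - 7459 * x + 2012) * hx + (-52660 * x ^ 6 + 28530 * x ^ 5
      + 346967 * x ^ 4 - 81312 * x ^ 3 - 507074 * x ^ 2 + 120178 * x + 364734) * h
  norm_num at this

theorem hessNum_ne_zero_of_isRoot_critPoly (hx : critPoly.IsRoot x) :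
    -5 * x ^ 6 + 15 * x ^ 4 + 14 * x ^ 3 - 27 * x ^ 2 + 9 ≠ 0 := by
  rw [isRoot_critPoly_iff] at hx
  intro h
  have : (62318660251023 : ℂ) = 0 := by
    linear_combination (-2358330386140 * x ^ 5 + 384703785420 * x ^ 4 + 6524115827025 * x ^ 3
      + 5765728049662 * x ^ 2 - 12173718309552 * x + 2686439333214) * hx
      + (-9433321544560 * x ^ 6 + 25122119003080 * x ^ 5 + 31211080921232 * x ^ 4
      - 108730039113662 * x ^ 3 + 32765505699169 * x ^ 2 + 44515967608764 * x
      - 3821461749409) * h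
  norm_num at this

noncomputable def critY (x : ℂ) : ℂ := (-4 * x ^ 3 + 5 * x ^ 2 + 2) / (6 * x ^ 2 - 6)

theorem isCritPt_iff : IsCritPt (x, y) ↔ critPoly.IsRoot x ∧ y = critY x := by
  rw [isCritPt_iff_eqns]
  constructor
  · rintro ⟨-, -, e1, e2⟩
    have hx : critPoly.IsRoot x := by
      rw [isRoot_critPoly_iff]
      linear_combination (2 * x - 6 * x * y + 5 * x ^ 3 + 6 * x ^ 3 * y - 4 * x ^ 4) * e1
        + (-18 + 36 * x ^ 2 - 18 * x ^ 4) * e2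
    refine ⟨hx, ?_⟩
    rw [critY, eq_div_iff (sq_sub_ne_zero_of_isRoot_critPoly hx)]
    linear_combination e1
  · rintro ⟨hx, rfl⟩
    have hD := sq_sub_ne_zero_of_isRoot_critPoly hx
    have e1 : (6 * x ^ 2 - 6) * critY x = -4 * x ^ 3 + 5 * x ^ 2 + 2 := mul_div_cancel₀ _ hD
    refine ⟨ne_zero_of_isRoot_critPoly hx,
      div_ne_zero (critNum_ne_zero_of_isRoot_critPoly hx) hD, e1, ?_⟩
    rw [isRoot_critPoly_iff] at hx
    have h : (2 * x * critY x ^ 2 - (2 * x ^ 3 - 5 * x ^ 2 + x + 2)) * (6 * x ^ 2 - 6) ^ 2 = 0 := by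
      linear_combination
        2 * x * ((6 * x ^ 2 - 6) * critY x + (-4 * x ^ 3 + 5 * x ^ 2 + 2)) * e1 - 2 * hx
    exact sub_eq_zero.1 ((mul_eq_zero.1 h).resolve_right (pow_ne_zero 2 hD))

theorem setOf_isCritPt_eq :
    {p : ℂ × ℂ | IsCritPt p} = (fun x => (x, critY x)) '' critPoly.rootSet ℂ := by
  ext ⟨x, y⟩
  simp [isCritPt_iff, mem_rootSet_of_ne critPoly_separable.ne_zero, eq_comm]

theorem hessDet_ne_zero_of_isCritPt (h : IsCritPt (x, y)) : hessDet (x, y) ≠ 0 := by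
  obtain ⟨hx, hy, e1, e2⟩ := isCritPt_iff_eqns.1 h
  rw [hessDet_eq hx hy]
  refine div_ne_zero (fun h0 => hessNum_ne_zero_of_isRoot_critPoly (isCritPt_iff.1 h).1 ?_)
    (by simp [hx, hy])
  have key : 4 * y ^ 2 * (-5 * x ^ 6 + 15 * x ^ 4 + 14 * x ^ 3 - 27 * x ^ 2 + 9) = 0 := by
    linear_combination (x ^ 2 - 1) * h0
      + (x ^ 2 - 1) * (8 * x ^ 3 + 8 + 24 * y) * e2
      - ((x ^ 2 - 1) * (-4 * x ^ 3 + 5 * x ^ 2 + 2 + (6 * x ^ 2 - 6) * y) + 8 * x * y ^ 2) * e1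
  simpa [hy] using key

/-- `W` has exactly 7 critical points in `(ℂ∖{0})²`, and each of them is
nondegenerate (nonvanishing Hessian determinant). -/
theorem W_critical_points :
    {p : ℂ × ℂ | IsCritPt p}.ncard = 7 ∧
      ∀ p : ℂ × ℂ, IsCritPt p → hessDet p ≠ 0 := by
  refine ⟨?_, fun ⟨x, y⟩ => hessDet_ne_zero_of_isCritPt⟩
  rw [setOf_isCritPt_eq, Set.ncard_image_of_injective _ fun x x' h => (Prod.ext_iff.1 h).1,
    ncard_rootSet_critPoly]
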